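/- arXiv:1908.04894 — 2 statements merged into one kernel-verified Lean document; each statement's English description precedes it below -/
import Mathlib

section
/- Let G be a group, H a normal subgroup of G of finite index, X a generating set of H, and Y a right transversal of H in G with 1 ∈ Y. Suppose there are constants L and N such that: (i) |y x y⁻¹|_X ≤ L for all x ∈ X ∪ X⁻¹ and all y ∈ Y (note y x y⁻¹ ∈ H by normality); (ii) |y a y'⁻¹|_X ≤ N for all y, y' ∈ Y and all a ∈ Y ∪ Y⁻¹ with y a y'⁻¹ ∈ H. Then X ∪ Y generates G and, setting M = max(L,N), for every h ∈ H one has |h|_{X∪Y} ≤ |h|_X ≤ M · |h|_{X∪Y}; moreover for every g ∈ G there exists h ∈ H with |h⁻¹g|_{X∪Y} ≤ 1. In particular, the inclusion map (H, d_X) → (G, d_{X∪Y}) is an H-equivariant quasi-isometry. -/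
namespace Paper

variable {G : Type*} [Group G]

/-- Word length of `g` with respect to `S`: the least `n` such that `g` is a product of
`n` elements of `S ∪ S⁻¹` (with `|1|_S = 0`). -/
noncomputable def wlen (S : Set G) (g : G) : ℕ :=
  sInf {n : ℕ | ∃ l : List G, (∀ a ∈ l, a ∈ S ∨ a⁻¹ ∈ S) ∧ l.length = n ∧ l.prod = g}

/-- The word metric `d_S(g,h) = |g⁻¹h|_S`. -/
noncomputable def wdist (S : Set G) (g h : G) : ℕ := wlen S (g⁻¹ * h)

/-- `S` is a generating set of the subgroup `H`: `S ⊆ H` and `S` generates `H`. -/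
def GeneratesSubgroup (S : Set G) (H : Subgroup G) : Prop :=
  S ⊆ (H : Set G) ∧ Subgroup.closure S = H

/-- `S` is a generating set of `G`. -/
def Generates (S : Set G) : Prop := Subgroup.closure S = ⊤

/-- `(H, d_S)` is hyperbolic: the four-point condition holds on `H` for the word metric `d_S`. -/
def HyperbolicOn (H : Subgroup G) (S : Set G) : Prop :=
  ∃ δ : ℝ, 0 ≤ δ ∧ ∀ w ∈ H, ∀ x ∈ H, ∀ y ∈ H, ∀ z ∈ H,
    (wdist S w x : ℝ) + (wdist S y z : ℝ) ≤
      max ((wdist S w y : ℝ) + (wdist S x z : ℝ))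
          ((wdist S w z : ℝ) + (wdist S x y : ℝ)) + 2 * δ

/-- The left multiplication action of `K` on `(H, d_S)` is acylindrical. -/
def AcylindricalOn (H K : Subgroup G) (S : Set G) : Prop :=
  ∀ ε : ℝ, 0 < ε → ∃ R : ℝ, 0 < R ∧ ∃ N : ℕ, ∀ x ∈ H, ∀ y ∈ H,
    R ≤ (wdist S x y : ℝ) →
      {k : G | k ∈ K ∧ (wdist S (k * x) x : ℝ) ≤ ε ∧ (wdist S (k * y) y : ℝ) ≤ ε}.Finite ∧
      {k : G | k ∈ K ∧ (wdist S (k * x) x : ℝ) ≤ ε ∧ (wdist S (k * y) y : ℝ) ≤ ε}.ncard ≤ N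

/-- `X` is a largest hyperbolic generating set of the subgroup `H`. -/
def IsLargestHypGenSetOf (H : Subgroup G) (X : Set G) : Prop :=
  GeneratesSubgroup X H ∧ HyperbolicOn H X ∧
    ∀ W : Set G, GeneratesSubgroup W H → HyperbolicOn H W →
      ∃ K : ℕ, ∀ x ∈ X, wlen W x ≤ K

/-- `X` is a largest acylindrically hyperbolic generating set of the subgroup `H`. -/
def IsLargestAHGenSetOf (H : Subgroup G) (X : Set G) : Prop :=
  GeneratesSubgroup X H ∧ HyperbolicOn H X ∧ AcylindricalOn H H X ∧
    ∀ W : Set G, GeneratesSubgroup W H → HyperbolicOn H W → AcylindricalOn H H W →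
      ∃ K : ℕ, ∀ x ∈ X, wlen W x ≤ K

/-- A group is virtually cyclic if it contains a cyclic subgroup of finite index. -/
def VirtuallyCyclic (H : Type*) [Group H] : Prop :=
  ∃ C : Subgroup H, IsCyclic C ∧ C.FiniteIndex

/-- The subgroup `H` is acylindrically hyperbolic: `H` is not virtually cyclic and admits a
generating set `X` with `(H, d_X)` hyperbolic, `H ↷ (H, d_X)` acylindrical, `d_X` unbounded. -/
def AcylHypSubgroup (H : Subgroup G) : Prop :=
  ¬ VirtuallyCyclic H ∧
    ∃ X : Set G, GeneratesSubgroup X H ∧ HyperbolicOn H X ∧ AcylindricalOn H H X ∧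
      ∀ n : ℕ, ∃ x ∈ H, ∃ y ∈ H, n < wdist X x y

/-- `Y` is a right transversal of `H` in `G`: it contains exactly one element of
each right coset `Hg`. -/
def IsRightTransversal (H : Subgroup G) (Y : Set G) : Prop :=
  ∀ g : G, ∃! y, y ∈ Y ∧ g * y⁻¹ ∈ H

/-! Every word `a₁ ⋯ aₙ` over `X ∪ Y` representing `h ∈ H` is rewritten letter by letter,
starting from the coset representative `y₀ = 1`: with `yᵢ ∈ Y` the representative for which
`yᵢ aᵢ₊₁ ⋯ aₙ ∈ H`, one has `h = ∏ᵢ yᵢ₋₁ aᵢ yᵢ⁻¹` and `yₙ = 1`. Each factor lies in `H` and has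
`X`-length at most `L` when `aᵢ` is an `X`-letter (then `yᵢ = yᵢ₋₁` by normality) and at most `N`
when it is a `Y`-letter, so `|h|_X ≤ max L N · n`. -/

lemma wlen_le_length {S : Set G} (l : List G) (hl : ∀ a ∈ l, a ∈ S ∨ a⁻¹ ∈ S) :
    wlen S l.prod ≤ l.length :=
  Nat.sInf_le ⟨l, hl, rfl, rfl⟩

lemma wlen_le_one_of_mem {S : Set G} {a : G} (ha : a ∈ S) : wlen S a ≤ 1 := by
  simpa using wlen_le_length (S := S) [a] (by simp [ha])

lemma exists_list_length_eq_wlen {S : Set G} {g : G} (hg : g ∈ Subgroup.closure S) :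
    ∃ l : List G, (∀ a ∈ l, a ∈ S ∨ a⁻¹ ∈ S) ∧ l.length = wlen S g ∧ l.prod = g := by
  rw [← Subgroup.mem_toSubmonoid, Subgroup.closure_toSubmonoid] at hg
  obtain ⟨l, hl, hprod⟩ := Submonoid.exists_list_of_mem_closure hg
  have hne :
      {n : ℕ | ∃ l : List G, (∀ a ∈ l, a ∈ S ∨ a⁻¹ ∈ S) ∧ l.length = n ∧ l.prod = g}.Nonempty :=
    ⟨l.length, l, fun a ha => (hl a ha).imp id Set.mem_inv.mp, rfl, hprod⟩
  exact Nat.sInf_mem hne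

lemma wlen_mul_le {S : Set G} {g₁ g₂ : G} (h₁ : g₁ ∈ Subgroup.closure S)
    (h₂ : g₂ ∈ Subgroup.closure S) : wlen S (g₁ * g₂) ≤ wlen S g₁ + wlen S g₂ := by
  obtain ⟨l₁, hl₁, hlen₁, rfl⟩ := exists_list_length_eq_wlen h₁
  obtain ⟨l₂, hl₂, hlen₂, rfl⟩ := exists_list_length_eq_wlen h₂
  have hl : ∀ a ∈ l₁ ++ l₂, a ∈ S ∨ a⁻¹ ∈ S := by
    simpa only [List.mem_append, or_imp, forall_and] using ⟨hl₁, hl₂⟩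
  simpa [hlen₁, hlen₂] using wlen_le_length (l₁ ++ l₂) hl

lemma wlen_le_of_subset {S T : Set G} (hST : S ⊆ T) {g : G} (hg : g ∈ Subgroup.closure S) :
    wlen T g ≤ wlen S g := by
  obtain ⟨l, hl, hlen, rfl⟩ := exists_list_length_eq_wlen hg
  exact hlen ▸ wlen_le_length l fun a ha => (hl a ha).imp (@hST a) (@hST a⁻¹)

namespace IsRightTransversal

variable {H : Subgroup G} {Y : Set G}

lemma eq_one_of_mem (hY : IsRightTransversal H Y) (h1Y : (1 : G) ∈ Y) {y : G} (hyY : y ∈ Y)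
    (hyH : y ∈ H) : y = 1 :=
  (hY 1).unique ⟨hyY, by simpa using hyH⟩ ⟨h1Y, by simp [one_mem]⟩

lemma closure_union_eq_top (hY : IsRightTransversal H Y) {X : Set G}
    (hXcl : Subgroup.closure X = H) : Subgroup.closure (X ∪ Y) = ⊤ := by
  refine eq_top_iff.mpr fun g _ => ?_
  obtain ⟨y, ⟨hyY, hgyH⟩, -⟩ := hY g
  have hgy : g * y⁻¹ ∈ Subgroup.closure (X ∪ Y) :=
    Subgroup.closure_mono Set.subset_union_left (hXcl ▸ hgyH)
  simpa using mul_mem hgy (Subgroup.subset_closure (Or.inr hyY))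

lemma wlen_mul_prod_le {X S : Set G} (hY : IsRightTransversal H Y) (h1Y : (1 : G) ∈ Y)
    (hXcl : Subgroup.closure X = H) {C : ℕ}
    (hstep : ∀ a : G, (a ∈ S ∨ a⁻¹ ∈ S) → ∀ y ∈ Y, ∀ g : G, y * (a * g) ∈ H →
      ∃ y' ∈ Y, y' * g ∈ H ∧ wlen X (y * a * y'⁻¹) ≤ C) :
    ∀ l : List G, (∀ a ∈ l, a ∈ S ∨ a⁻¹ ∈ S) →
      ∀ y ∈ Y, y * l.prod ∈ H → wlen X (y * l.prod) ≤ C * l.length := by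
  intro l
  induction l with
  | nil =>
    intro _ y hyY hyH
    rw [List.prod_nil, mul_one] at hyH
    simpa [hY.eq_one_of_mem h1Y hyY hyH] using wlen_le_length (S := X) []
  | cons a t ih =>
    intro hl y hyY hH
    rw [List.prod_cons] at hH ⊢
    obtain ⟨y', hy'Y, hy'H, hbound⟩ := hstep a (hl a List.mem_cons_self) y hyY t.prod hH
    have hfactorH : y * a * y'⁻¹ ∈ H := by
      simpa [mul_assoc] using mul_mem hH (inv_mem hy'H)
    calc wlen X (y * (a * t.prod))
        = wlen X (y * a * y'⁻¹ * (y' * t.prod)) := by group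
      _ ≤ wlen X (y * a * y'⁻¹) + wlen X (y' * t.prod) :=
          wlen_mul_le (hXcl ▸ hfactorH) (hXcl ▸ hy'H)
      _ ≤ C + C * t.length :=
          Nat.add_le_add hbound (ih (fun b hb => hl b (List.mem_cons_of_mem _ hb)) y' hy'Y hy'H)
      _ = C * (a :: t).length := by rw [List.length_cons]; ring

lemma exists_wlen_mul_mul_inv_le (hY : IsRightTransversal H Y) (hNor : H.Normal) {X : Set G}
    (hXH : X ⊆ (H : Set G)) {L N : ℕ}
    (hL : ∀ x : G, (x ∈ X ∨ x⁻¹ ∈ X) → ∀ y ∈ Y, wlen X (y * x * y⁻¹) ≤ L)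
    (hN : ∀ y ∈ Y, ∀ y' ∈ Y, ∀ a : G, (a ∈ Y ∨ a⁻¹ ∈ Y) → y * a * y'⁻¹ ∈ H →
      wlen X (y * a * y'⁻¹) ≤ N)
    (a : G) (ha : a ∈ X ∪ Y ∨ a⁻¹ ∈ X ∪ Y) (y : G) (hyY : y ∈ Y) (g : G)
    (hH : y * (a * g) ∈ H) : ∃ y' ∈ Y, y' * g ∈ H ∧ wlen X (y * a * y'⁻¹) ≤ max L N := by
  rcases or_or_or_comm.mp ha with hX | hYa
  · have haH : a ∈ H := hX.elim (@hXH a) fun h => by simpa using inv_mem (hXH h)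
    refine ⟨y, hyY, ?_, (hL a hX y hyY).trans (le_max_left L N)⟩
    have hconj : y * a⁻¹ * y⁻¹ ∈ H := hNor.conj_mem _ (inv_mem haH) y
    simpa [mul_assoc] using mul_mem hconj hH
  · obtain ⟨y', ⟨hy'Y, hgy'H⟩, -⟩ := hY g⁻¹
    have hy'H : y' * g ∈ H := by simpa using inv_mem hgy'H
    have hfactorH : y * a * y'⁻¹ ∈ H := by
      simpa [mul_assoc] using mul_mem hH (inv_mem hy'H)
    exact ⟨y', hy'Y, hy'H, (hN y hyY y' hy'Y a hYa hfactorH).trans (le_max_right L N)⟩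

end IsRightTransversal

theorem stmt_5_general {G : Type*} [Group G] (H : Subgroup G) (hNor : H.Normal)
    (X : Set G) (hX : GeneratesSubgroup X H)
    (Y : Set G) (hY : IsRightTransversal H Y) (h1Y : (1 : G) ∈ Y)
    (L N : ℕ)
    (hL : ∀ x : G, (x ∈ X ∨ x⁻¹ ∈ X) → ∀ y ∈ Y, wlen X (y * x * y⁻¹) ≤ L)
    (hN : ∀ y ∈ Y, ∀ y' ∈ Y, ∀ a : G, (a ∈ Y ∨ a⁻¹ ∈ Y) → y * a * y'⁻¹ ∈ H →
      wlen X (y * a * y'⁻¹) ≤ N) :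
    Generates (X ∪ Y) ∧
      (∀ h ∈ H, wlen (X ∪ Y) h ≤ wlen X h ∧ wlen X h ≤ max L N * wlen (X ∪ Y) h) ∧
      ∀ g : G, ∃ h ∈ H, wlen (X ∪ Y) (h⁻¹ * g) ≤ 1 := by
  obtain ⟨hXH, hXcl⟩ := hX
  have hgen : Subgroup.closure (X ∪ Y) = ⊤ := hY.closure_union_eq_top hXcl
  refine ⟨hgen, fun h hH => ⟨wlen_le_of_subset Set.subset_union_left (hXcl ▸ hH), ?_⟩,
    fun g => ?_⟩
  · obtain ⟨l, hl, hlen, rfl⟩ := exists_list_length_eq_wlen (hgen ▸ Subgroup.mem_top h)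
    have hstep := hY.exists_wlen_mul_mul_inv_le hNor hXH hL hN
    simpa [hlen] using hY.wlen_mul_prod_le h1Y hXcl hstep l hl 1 h1Y (by simpa using hH)
  · obtain ⟨y, ⟨hyY, hgyH⟩, -⟩ := hY g
    exact ⟨g * y⁻¹, hgyH, by simpa using wlen_le_one_of_mem (S := X ∪ Y) (Or.inr hyY)⟩

/-- Quantitative form: for a normal finite-index subgroup `H ≤ G` with generating set `X`
and a right transversal `Y ∋ 1`, bounds (i) and (ii) imply that `X ∪ Y` generates `G` and
`|h|_{X∪Y} ≤ |h|_X ≤ max L N · |h|_{X∪Y}` for `h ∈ H`, and every `g ∈ G` is at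
`d_{X∪Y}`-distance at most `1` from `H`; i.e. the inclusion `(H,d_X) → (G,d_{X∪Y})` is an
`H`-equivariant quasi-isometry. -/
theorem stmt_5 {G : Type*} [Group G] (H : Subgroup G) (hNor : H.Normal) (hFI : H.FiniteIndex)
    (X : Set G) (hX : GeneratesSubgroup X H)
    (Y : Set G) (hY : IsRightTransversal H Y) (h1Y : (1 : G) ∈ Y)
    (L N : ℕ)
    (hL : ∀ x : G, (x ∈ X ∨ x⁻¹ ∈ X) → ∀ y ∈ Y, wlen X (y * x * y⁻¹) ≤ L)
    (hN : ∀ y ∈ Y, ∀ y' ∈ Y, ∀ a : G, (a ∈ Y ∨ a⁻¹ ∈ Y) → y * a * y'⁻¹ ∈ H →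
      wlen X (y * a * y'⁻¹) ≤ N) :
    Generates (X ∪ Y) ∧
      (∀ h ∈ H, wlen (X ∪ Y) h ≤ wlen X h ∧ wlen X h ≤ max L N * wlen (X ∪ Y) h) ∧
      ∀ g : G, ∃ h ∈ H, wlen (X ∪ Y) (h⁻¹ * g) ≤ 1 :=
  stmt_5_general H hNor X hX Y hY h1Y L N hL hN

end Paper
end

section
/- Let G be a group, H a normal subgroup of G, Y ⊆ G a finite subset, and X a largest hyperbolic generating set of H. Then there exists a constant L such that |y x y⁻¹|_X ≤ L and |y x⁻¹ y⁻¹|_X ≤ L for all x ∈ X and all y ∈ Y (note that y x y⁻¹ ∈ H by normality, so its word length with respect to X is defined). -/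
namespace Paper

variable {G : Type*} [Group G]

lemma wlen_inv (S : Set G) (g : G) : wlen S g⁻¹ = wlen S g := by
  have key : ∀ h : G, ∀ n,
      (∃ l : List G, (∀ a ∈ l, a ∈ S ∨ a⁻¹ ∈ S) ∧ l.length = n ∧ l.prod = h) →
      (∃ l : List G, (∀ a ∈ l, a ∈ S ∨ a⁻¹ ∈ S) ∧ l.length = n ∧ l.prod = h⁻¹) := by
    rintro h n ⟨l, hl, hlen, hprod⟩
    refine ⟨(l.map (·⁻¹)).reverse, ?_, by simp [hlen], ?_⟩
    · intro a ha
      simp only [List.mem_reverse, List.mem_map] at ha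
      obtain ⟨b, hb, rfl⟩ := ha
      rcases hl b hb with h1 | h1
      · exact Or.inr (by simpa using h1)
      · exact Or.inl h1
    · rw [← hprod, ← List.prod_inv_reverse]
  unfold wlen
  congr 1
  ext n
  constructor
  · intro hx
    simpa using key g⁻¹ n hx
  · exact key g n

lemma wlen_image (φ : G ≃* G) (S : Set G) (g : G) :
    wlen ((φ : G → G) '' S) (φ g) = wlen S g := by
  have key : ∀ (ψ : G ≃* G) (T : Set G) (h : G) (n : ℕ),
      (∃ l : List G, (∀ a ∈ l, a ∈ T ∨ a⁻¹ ∈ T) ∧ l.length = n ∧ l.prod = h) →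
      (∃ l : List G, (∀ a ∈ l, a ∈ (ψ : G → G) '' T ∨ a⁻¹ ∈ (ψ : G → G) '' T) ∧
        l.length = n ∧ l.prod = ψ h) := by
    rintro ψ T h n ⟨l, hl, hlen, hprod⟩
    refine ⟨l.map ψ, ?_, by simp [hlen], ?_⟩
    · intro a ha
      simp only [List.mem_map] at ha
      obtain ⟨b, hb, rfl⟩ := ha
      rcases hl b hb with h1 | h1
      · exact Or.inl ⟨b, h1, rfl⟩
      · exact Or.inr ⟨b⁻¹, h1, by simp⟩
    · rw [← hprod]
      exact (map_list_prod ψ.toMonoidHom l).symm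
  unfold wlen
  congr 1
  ext n
  constructor
  · intro hx
    have := key φ.symm ((φ : G → G) '' S) (φ g) n hx
    simpa [← Set.image_comp, Function.comp] using this
  · exact key φ S g n

/-- If `H ⊴ G`, `Y ⊆ G` is finite and `X` is a largest hyperbolic generating set of `H`,
then there is `L` with `|y x y⁻¹|_X ≤ L` and `|y x⁻¹ y⁻¹|_X ≤ L` for all `x ∈ X`, `y ∈ Y`. -/
theorem stmt_12 {G : Type*} [Group G] (H : Subgroup G) (hNor : H.Normal)
    (Y : Set G) (hYfin : Y.Finite)
    (X : Set G) (hX : IsLargestHypGenSetOf H X) :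
    ∃ L : ℕ, ∀ x ∈ X, ∀ y ∈ Y,
      wlen X (y * x * y⁻¹) ≤ L ∧ wlen X (y * x⁻¹ * y⁻¹) ≤ L := by
  obtain ⟨⟨hXsub, hXcl⟩, hXhyp, hXlargest⟩ := hX
  have key : ∀ y : G, ∃ K : ℕ, ∀ x ∈ X, wlen X (y * x * y⁻¹) ≤ K := by
    intro y
    set φ : G ≃* G := MulAut.conj y⁻¹ with hφ
    have hφ_apply : ∀ a : G, φ a = y⁻¹ * a * y := by
      intro a; simp [hφ, MulAut.conj_apply]
    set W : Set G := (φ : G → G) '' X with hW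
    have hWlen : ∀ x : G, wlen W x = wlen X (y * x * y⁻¹) := by
      intro x
      have := wlen_image φ X (y * x * y⁻¹)
      rw [hφ_apply] at this
      have hx : y⁻¹ * (y * x * y⁻¹) * y = x := by group
      rw [hx] at this
      exact this
    have hWgen : GeneratesSubgroup W H := by
      constructor
      · rintro a ⟨b, hb, rfl⟩
        rw [hφ_apply]
        have : y⁻¹ * b * (y⁻¹)⁻¹ ∈ H := hNor.conj_mem b (hXsub hb) y⁻¹
        simpa using this
      · rw [hW, ← MulEquiv.coe_toMonoidHom, ← MonoidHom.map_closure, hXcl]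
        ext a
        simp only [Subgroup.mem_map, MulEquiv.coe_toMonoidHom]
        constructor
        · rintro ⟨b, hb, rfl⟩
          rw [hφ_apply]
          simpa using hNor.conj_mem b hb y⁻¹
        · intro ha
          refine ⟨y * a * y⁻¹, hNor.conj_mem a ha y, ?_⟩
          rw [hφ_apply]; group
    have hWdist : ∀ a b : G, wdist W a b = wdist X (y * a * y⁻¹) (y * b * y⁻¹) := by
      intro a b
      unfold wdist
      rw [hWlen]
      congr 1
      group
    have hWhyp : HyperbolicOn H W := by
      obtain ⟨δ, hδ, hfp⟩ := hXhyp
      refine ⟨δ, hδ, ?_⟩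
      intro w hw x hx z hz u hu
      rw [hWdist w x, hWdist z u, hWdist w z, hWdist x u, hWdist w u, hWdist x z]
      exact hfp _ (hNor.conj_mem w hw y) _ (hNor.conj_mem x hx y)
        _ (hNor.conj_mem z hz y) _ (hNor.conj_mem u hu y)
    obtain ⟨K, hK⟩ := hXlargest W hWgen hWhyp
    exact ⟨K, fun x hx => (hWlen x) ▸ hK x hx⟩
  choose f hf using key
  refine ⟨hYfin.toFinset.sup f, ?_⟩
  intro x hx y hy
  have hle : f y ≤ hYfin.toFinset.sup f := Finset.le_sup (hYfin.mem_toFinset.2 hy)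
  constructor
  · exact le_trans (hf y x hx) hle
  · have : wlen X (y * x⁻¹ * y⁻¹) = wlen X (y * x * y⁻¹) := by
      rw [show y * x⁻¹ * y⁻¹ = (y * x * y⁻¹)⁻¹ by group, wlen_inv]
    rw [this]
    exact le_trans (hf y x hx) hle

end Paper
end
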